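/- Local approximation of quasi-local even observables: let Λ ⊆ Γ be finite, X ⊆ Λ, ε > 0, and A ∈ 𝔄_Λ⁺. If ‖[A, B]‖ ≤ ε‖B‖ for all B ∈ 𝔄_{Λ∖X}, then ‖A − 𝔼_X^Λ(A)‖ ≤ ε; in particular, since 𝔼_X^Λ(A) ∈ 𝔄_X⁺, there exists A′ ∈ 𝔄_X⁺ with ‖A − A′‖ ≤ ε. -/

import Mathlib

open scoped Classical

/-- The canonical anticommutation relations for a family `a x` of annihilation
operators in a C*-algebra. -/
def IsCAR {Γ A : Type*} [Ring A] [StarRing A] (a : Γ → A) : Prop :=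
  (∀ x y, a x * a y + a y * a x = 0) ∧
  (∀ x y, star (a x) * star (a y) + star (a y) * star (a x) = 0) ∧
  (∀ x y, a x * star (a y) + star (a y) * a x = if x = y then (1 : A) else 0)

/-- The four possible factors of a monomial at a site `x`:
`1`, `a x`, `a x *`, and `a x * a x`. -/
def carFactor {Γ A : Type*} [Ring A] [StarRing A] (a : Γ → A) (k : Fin 4) (x : Γ) : A :=
  match k with
  | 0 => 1
  | 1 => a x
  | 2 => star (a x)
  | 3 => star (a x) * a x

/-- The monomial with factor pattern `k` along the enumeration `l` of a finite set of sites. -/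
def carMonomial {Γ A : Type*} [Ring A] [StarRing A] (a : Γ → A) (l : List Γ)
    (k : Γ → Fin 4) : A :=
  (l.map fun x => carFactor a (k x) x).prod

/-- The number of odd factors (`a x` or `a x *`) of the monomial with pattern `k` along `l`. -/
def carOddCount {Γ : Type*} (l : List Γ) (k : Γ → Fin 4) : ℕ :=
  l.countP fun x => decide (k x = 1 ∨ k x = 2)

/-- `𝔄_X`: the linear span of the monomials supported in the finite set `X`. -/
def carSpan {Γ A : Type*} [Ring A] [StarRing A] [Algebra ℂ A] (a : Γ → A) (X : Finset Γ) :
    Submodule ℂ A :=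
  Submodule.span ℂ {m | ∃ (l : List Γ) (k : Γ → Fin 4),
    l.Nodup ∧ l.toFinset = X ∧ m = carMonomial a l k}

/-- `𝔄_X⁺`: the linear span of the even monomials supported in the finite set `X`. -/
def carSpanEven {Γ A : Type*} [Ring A] [StarRing A] [Algebra ℂ A] (a : Γ → A) (X : Finset Γ) :
    Submodule ℂ A :=
  Submodule.span ℂ {m | ∃ (l : List Γ) (k : Γ → Fin 4),
    l.Nodup ∧ l.toFinset = X ∧ Even (carOddCount l k) ∧ m = carMonomial a l k}

/-- The single-site unitaries `u_x^(0) = 1`, `u_x^(1) = a_x* + a_x`, `u_x^(2) = a_x* − a_x`,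
`u_x^(3) = 1 − 2 a_x* a_x`. -/
def uFactor {Γ A : Type*} [Ring A] [StarRing A] (a : Γ → A) (k : Fin 4) (x : Γ) : A :=
  match k with
  | 0 => 1
  | 1 => star (a x) + a x
  | 2 => star (a x) - a x
  | 3 => 1 - 2 * (star (a x) * a x)

/-- The unitary `u(α) = u_{x_1}^{(α(x_1))} ⋯ u_{x_n}^{(α(x_n))}` along the enumeration `l`
of `Λ ∖ X`. -/
def uProd {Γ A : Type*} [Ring A] [StarRing A] (a : Γ → A) (l : List Γ)
    (α : Fin l.length → Fin 4) : A :=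
  (List.ofFn fun i => uFactor a (α i) (l.get i)).prod

/-- The conditional expectation `𝔼_X^Λ(B) = 4^{−|Λ∖X|} ∑_{α} u(α)* B u(α)`, where `l` is
an enumeration of `Λ ∖ X`. -/
noncomputable def condExp {Γ A : Type*} [Ring A] [StarRing A] [Algebra ℂ A] (a : Γ → A)
    (l : List Γ) (B : A) : A :=
  ((4 : ℂ) ^ l.length)⁻¹ • ∑ α : Fin l.length → Fin 4, star (uProd a l α) * B * uProd a l α

/-!
Every `u(α)` is a unitary of `𝔄_{Λ∖X}`, and `A - u(α)* A u(α) = u(α)* [u(α), A]`; so each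
conjugate of `A` is `ε`-close to `A`, and so is their average `𝔼_X^Λ(A)`.

For the support, `𝔼_X^Λ` is the composite of the one-site averages over the sites `x` of `Λ ∖ X`.
Conjugating an even monomial by `u_x^(j)` moves the unitary past the factors at the other sites,
at the cost of the sign `(-1)^(p(j)·n)`, where `p(j)` is the parity of `u_x^(j)` and `n` the
number of odd factors away from `x`. As the monomial is even, `n` has the parity of its factor at
`x`, and the resulting signed average sends `1 ↦ 1`, `a_x* a_x ↦ 1/2` and kills `a_x`, `a_x*`.
Hence the one-site average at `x` maps `𝔄_S⁺` into `𝔄_{S∖{x}}⁺`.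
-/

namespace IsCAR

variable {Γ A : Type*} [Ring A] [StarRing A] {a : Γ → A}

theorem mul_self_eq_zero [Algebra ℂ A] (h : IsCAR a) (x : Γ) : a x * a x = 0 := by
  have := h.1 x x
  rw [← two_smul ℂ] at this
  exact (smul_eq_zero.mp this).resolve_left two_ne_zero

theorem star_mul_star_self_eq_zero [Algebra ℂ A] (h : IsCAR a) (x : Γ) :
    star (a x) * star (a x) = 0 := by
  have := h.2.1 x x
  rw [← two_smul ℂ] at this
  exact (smul_eq_zero.mp this).resolve_left two_ne_zero

theorem mul_star_self (h : IsCAR a) (x : Γ) : a x * star (a x) = 1 - star (a x) * a x :=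
  eq_sub_of_add_eq (by simpa using h.2.2 x x)

theorem star_mul_star_self_mul_eq_zero [Algebra ℂ A] (h : IsCAR a) (x : Γ) (z : A) :
    star (a x) * (star (a x) * z) = 0 := by
  rw [← mul_assoc, h.star_mul_star_self_eq_zero, zero_mul]

theorem mul_star_self_mul (h : IsCAR a) (x : Γ) (z : A) :
    a x * (star (a x) * z) = z - star (a x) * (a x * z) := by
  rw [← mul_assoc, h.mul_star_self, sub_mul, one_mul, mul_assoc]

end IsCAR

def carParity (m : Fin 4) : ℕ := if m = 1 ∨ m = 2 then 1 else 0

@[simp] theorem carParity_zero : carParity 0 = 0 := rfl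
@[simp] theorem carParity_one : carParity 1 = 1 := rfl
@[simp] theorem carParity_two : carParity 2 = 1 := rfl
@[simp] theorem carParity_three : carParity 3 = 0 := rfl

theorem carParity_eq_zero_or_one (m : Fin 4) : carParity m = 0 ∨ carParity m = 1 := by
  unfold carParity
  split_ifs <;> simp

section Monomial

variable {Γ A : Type*} [Ring A] [StarRing A] {a : Γ → A}

@[simp] theorem carFactor_zero (x : Γ) : carFactor a 0 x = 1 := rfl
@[simp] theorem carFactor_one (x : Γ) : carFactor a 1 x = a x := rfl
@[simp] theorem carFactor_two (x : Γ) : carFactor a 2 x = star (a x) := rfl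
@[simp] theorem carFactor_three (x : Γ) : carFactor a 3 x = star (a x) * a x := rfl

theorem carMonomial_cons (y : Γ) (t : List Γ) (k : Γ → Fin 4) :
    carMonomial a (y :: t) k = carFactor a (k y) y * carMonomial a t k := by
  simp [carMonomial]

theorem carMonomial_append (P S : List Γ) (k : Γ → Fin 4) :
    carMonomial a (P ++ S) k = carMonomial a P k * carMonomial a S k := by
  simp [carMonomial]

theorem carMonomial_congr {l : List Γ} {k₁ k₂ : Γ → Fin 4} (hk : ∀ y ∈ l, k₁ y = k₂ y) :
    carMonomial a l k₁ = carMonomial a l k₂ := by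
  unfold carMonomial
  rw [List.map_congr_left fun y hy => by rw [hk y hy]]

omit [Ring A] [StarRing A] in
theorem carOddCount_cons (y : Γ) (t : List Γ) (k : Γ → Fin 4) :
    carOddCount (y :: t) k = carParity (k y) + carOddCount t k := by
  simp [carOddCount, List.countP_cons, carParity, add_comm]

omit [Ring A] [StarRing A] in
theorem carOddCount_append (P S : List Γ) (k : Γ → Fin 4) :
    carOddCount (P ++ S) k = carOddCount P k + carOddCount S k := by
  simp [carOddCount, List.countP_append]

end Monomial

section CommutesUpTo

variable {R A : Type*} [CommSemiring R] [Ring A] [Algebra R A]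

def CommutesUpTo (ε : R) (p q : A) : Prop := p * q = ε • (q * p)

namespace CommutesUpTo

variable {ε δ : R} {p p' q q' : A}

theorem one_left (q : A) : CommutesUpTo (1 : R) 1 q := by simp [CommutesUpTo]

theorem one_right (p : A) : CommutesUpTo (1 : R) p 1 := by simp [CommutesUpTo]

theorem mul_left (h : CommutesUpTo ε p q) (h' : CommutesUpTo δ p' q) :
    CommutesUpTo (ε * δ) (p * p') q := by
  unfold CommutesUpTo at *
  rw [mul_assoc, h', mul_smul_comm, ← mul_assoc, h, smul_mul_assoc, smul_smul, mul_comm δ,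
    mul_assoc]

theorem mul_right (h : CommutesUpTo ε p q) (h' : CommutesUpTo δ p q') :
    CommutesUpTo (ε * δ) p (q * q') := by
  unfold CommutesUpTo at *
  rw [← mul_assoc, h, smul_mul_assoc, mul_assoc, h', mul_smul_comm, smul_smul, mul_assoc]

theorem add_left (h : CommutesUpTo ε p q) (h' : CommutesUpTo ε p' q) :
    CommutesUpTo ε (p + p') q := by
  unfold CommutesUpTo at *
  rw [add_mul, h, h', mul_add, smul_add]

theorem sub_left (h : CommutesUpTo ε p q) (h' : CommutesUpTo ε p' q) :
    CommutesUpTo ε (p - p') q := by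
  unfold CommutesUpTo at *
  rw [sub_mul, h, h', mul_sub, smul_sub]

theorem neg_left (h : CommutesUpTo ε p q) : CommutesUpTo ε (-p) q := by
  unfold CommutesUpTo at *
  rw [neg_mul, h, mul_neg, smul_neg]

theorem symm (h : CommutesUpTo ε p q) (hε : ε * ε = 1) : CommutesUpTo ε q p := by
  unfold CommutesUpTo at *
  rw [h, smul_smul, hε, one_smul]

theorem conj_mul_mul (hP : CommutesUpTo ε p q) (hS : CommutesUpTo δ q' p') (f : A) :
    p * (q * f * q') * p' = (ε * δ) • (q * (p * f * p') * q') := by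
  unfold CommutesUpTo at *
  calc p * (q * f * q') * p' = (p * q) * f * (q' * p') := by noncomm_ring
    _ = (ε * δ) • (q * (p * f * p') * q') := by
      rw [hP, hS, smul_mul_assoc, smul_mul_assoc, mul_smul_comm, smul_smul]
      noncomm_ring

end CommutesUpTo

end CommutesUpTo

section CrossSite

variable {Γ A : Type*} [Ring A] [StarRing A] [Algebra ℂ A] {a : Γ → A}

theorem IsCAR.commutesUpTo_of_ne (h : IsCAR a) {x y : Γ} (hxy : x ≠ y) {p q : A}
    (hp : p = a x ∨ p = star (a x)) (hq : q = a y ∨ q = star (a y)) :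
    CommutesUpTo (-1 : ℂ) p q := by
  unfold CommutesUpTo
  rw [neg_one_smul, eq_neg_iff_add_eq_zero]
  rcases hp with rfl | rfl <;> rcases hq with rfl | rfl
  · exact h.1 x y
  · simpa [hxy] using h.2.2 x y
  · simpa [add_comm, Ne.symm hxy] using h.2.2 y x
  · exact h.2.1 x y

theorem IsCAR.commutesUpTo_carFactor (h : IsCAR a) {x y : Γ} (hxy : x ≠ y) (m m' : Fin 4) :
    CommutesUpTo ((-1 : ℂ) ^ (carParity m * carParity m')) (carFactor a m x)
      (carFactor a m' y) := by
  have odd_left : ∀ p, (p = a x ∨ p = star (a x)) →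
      CommutesUpTo ((-1 : ℂ) ^ carParity m') p (carFactor a m' y) := by
    intro p hp
    fin_cases m'
    · simpa using CommutesUpTo.one_right (R := ℂ) p
    · simpa using h.commutesUpTo_of_ne hxy hp (Or.inl rfl)
    · simpa using h.commutesUpTo_of_ne hxy hp (Or.inr rfl)
    · simpa using (h.commutesUpTo_of_ne hxy hp (Or.inr rfl)).mul_right
        (h.commutesUpTo_of_ne hxy hp (Or.inl rfl))
  fin_cases m
  · simpa using CommutesUpTo.one_left (R := ℂ) (carFactor a m' y)
  · simpa using odd_left _ (Or.inl rfl)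
  · simpa using odd_left _ (Or.inr rfl)
  · simpa [← pow_add] using (odd_left _ (Or.inr rfl)).mul_left (odd_left _ (Or.inl rfl))

theorem IsCAR.commutesUpTo_uFactor_carFactor (h : IsCAR a) {x y : Γ} (hxy : x ≠ y)
    (j m : Fin 4) :
    CommutesUpTo ((-1 : ℂ) ^ (carParity j * carParity m)) (uFactor a j x)
      (carFactor a m y) := by
  have hf := h.commutesUpTo_carFactor hxy (m' := m)
  fin_cases j
  · simpa [uFactor] using hf 0
  · simpa [uFactor] using (hf 2).add_left (hf 1)
  · simpa [uFactor] using (hf 2).sub_left (hf 1)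
  · simpa [uFactor, two_mul] using (hf 0).sub_left ((hf 3).add_left (hf 3))

theorem IsCAR.commutesUpTo_uFactor_carMonomial (h : IsCAR a) {x : Γ} {L : List Γ} (hx : x ∉ L)
    (j : Fin 4) (k : Γ → Fin 4) :
    CommutesUpTo ((-1 : ℂ) ^ (carParity j * carOddCount L k)) (uFactor a j x)
      (carMonomial a L k) := by
  induction L with
  | nil => simpa [carMonomial, carOddCount] using CommutesUpTo.one_right (R := ℂ) (uFactor a j x)
  | cons y t ih =>
    rw [List.mem_cons, not_or] at hx
    rw [carMonomial_cons, carOddCount_cons, mul_add, pow_add]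
    exact (h.commutesUpTo_uFactor_carFactor hx.1 j (k y)).mul_right (ih hx.2)

omit [Algebra ℂ A] in
theorem star_uFactor_eq_or (x : Γ) (j : Fin 4) :
    star (uFactor a j x) = uFactor a j x ∨ star (uFactor a j x) = -uFactor a j x := by
  fin_cases j
  · simp [uFactor]
  · simp [uFactor, add_comm]
  · simp [uFactor]
  · simp [uFactor, two_mul]

end CrossSite

section Unitaries

variable {Γ A : Type*} [Ring A] [StarRing A] [Algebra ℂ A] {a : Γ → A}

theorem IsCAR.uFactor_mem_unitary (h : IsCAR a) (x : Γ) (j : Fin 4) :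
    uFactor a j x ∈ unitary A := by
  rw [Unitary.mem_iff]
  fin_cases j <;> constructor <;>
  simp only [uFactor, star_one, star_add, star_sub, star_mul, star_star, two_mul, mul_add,
    add_mul, mul_sub, sub_mul, mul_assoc, one_mul, mul_one, h.mul_self_eq_zero,
    h.star_mul_star_self_eq_zero, h.mul_star_self, h.star_mul_star_self_mul_eq_zero,
    h.mul_star_self_mul] <;>
  abel

omit [Algebra ℂ A] in
theorem uProd_cons (x : Γ) (t : List Γ) (α : Fin (t.length + 1) → Fin 4) :
    uProd a (x :: t) α = uFactor a (α 0) x * uProd a t (Fin.tail α) := by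
  simp [uProd, List.ofFn_succ, Fin.tail]

theorem IsCAR.uProd_mem_unitary (h : IsCAR a) (l : List Γ) (α : Fin l.length → Fin 4) :
    uProd a l α ∈ unitary A :=
  Submonoid.list_prod_mem _ fun _ hu => by
    obtain ⟨i, rfl⟩ := List.mem_ofFn.mp hu
    exact h.uFactor_mem_unitary _ _

theorem uFactor_mem_span_carFactor (x : Γ) (j : Fin 4) :
    uFactor a j x ∈ Submodule.span ℂ (Set.range fun i => carFactor a i x) := by
  have hf : ∀ i, carFactor a i x ∈ Submodule.span ℂ (Set.range fun i => carFactor a i x) :=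
    fun i => Submodule.subset_span ⟨i, rfl⟩
  fin_cases j
  · simpa [uFactor] using hf 0
  · simpa [uFactor] using add_mem (hf 2) (hf 1)
  · simpa [uFactor] using sub_mem (hf 2) (hf 1)
  · simpa [uFactor, two_mul] using sub_mem (hf 0) (add_mem (hf 3) (hf 3))

theorem uProd_mem_span_carMonomial {l : List Γ} (hl : l.Nodup) (α : Fin l.length → Fin 4) :
    uProd a l α ∈ Submodule.span ℂ (Set.range (carMonomial a l)) := by
  induction l with
  | nil => exact Submodule.subset_span ⟨fun _ => 0, by simp [uProd, carMonomial]⟩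
  | cons x t ih =>
    rw [List.nodup_cons] at hl
    have hmul := Submodule.mul_mem_mul (uFactor_mem_span_carFactor (a := a) x (α 0))
      (ih hl.2 (Fin.tail α))
    rw [Submodule.span_mul_span] at hmul
    rw [uProd_cons]
    refine Submodule.span_mono ?_ hmul
    rintro _ ⟨_, ⟨i, rfl⟩, _, ⟨k, rfl⟩, rfl⟩
    refine ⟨Function.update k x i, ?_⟩
    rw [carMonomial_cons, Function.update_self, carMonomial_congr fun y hy =>
      Function.update_of_ne (ne_of_mem_of_not_mem hy hl.1) _ _]

theorem uProd_mem_carSpan {l : List Γ} (hl : l.Nodup) (α : Fin l.length → Fin 4) :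
    uProd a l α ∈ carSpan a l.toFinset :=
  Submodule.span_mono (by rintro _ ⟨k, rfl⟩; exact ⟨l, k, hl, rfl, rfl⟩)
    (uProd_mem_span_carMonomial hl α)

end Unitaries

section SiteAverage

variable {Γ A : Type*} [Ring A] [StarRing A] [Algebra ℂ A] {a : Γ → A}

/-- With `s = 1` this is the one-site conditional expectation at `x`. The weight `s` on the odd
unitaries `u_x^(1)`, `u_x^(2)` absorbs the sign they pick up when moved past the factors of a
monomial at the other sites. -/
noncomputable def siteAvg (a : Γ → A) (x : Γ) (s : ℂ) : A →ₗ[ℂ] A :=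
  (4 : ℂ)⁻¹ • ∑ j : Fin 4, s ^ carParity j •
    (LinearMap.mulRight ℂ (uFactor a j x) ∘ₗ LinearMap.mulLeft ℂ (star (uFactor a j x)))

theorem siteAvg_apply (x : Γ) (s : ℂ) (B : A) :
    siteAvg a x s B =
      (4 : ℂ)⁻¹ • ∑ j : Fin 4, s ^ carParity j • (star (uFactor a j x) * B * uFactor a j x) := by
  simp [siteAvg]

theorem IsCAR.siteAvg_carFactor_of_odd (h : IsCAR a) (x : Γ) {m : Fin 4}
    (hm : carParity m = 1) : siteAvg a x (-1) (carFactor a m x) = 0 := by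
  fin_cases m <;> simp at hm <;>
  simp only [siteAvg_apply, Fin.sum_univ_four, carParity_zero, carParity_one, carParity_two,
    carParity_three, carFactor, uFactor, star_one, star_add, star_sub, star_mul, star_star,
    two_mul, mul_add, add_mul, mul_sub, sub_mul, mul_assoc, one_mul, mul_one, mul_zero,
    h.mul_self_eq_zero, h.star_mul_star_self_eq_zero, h.mul_star_self,
    h.star_mul_star_self_mul_eq_zero, h.mul_star_self_mul] <;>
  module

theorem IsCAR.siteAvg_carFactor_of_even (h : IsCAR a) (x : Γ) {m : Fin 4}
    (hm : carParity m = 0) : ∃ c : ℂ, siteAvg a x 1 (carFactor a m x) = c • 1 := by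
  fin_cases m <;> simp at hm
  on_goal 1 => refine ⟨1, ?_⟩
  on_goal 2 => refine ⟨2⁻¹, ?_⟩
  all_goals
    simp only [siteAvg_apply, Fin.sum_univ_four, one_pow, one_smul, carFactor, uFactor, star_one,
      star_add, star_sub, star_mul, star_star, two_mul, mul_add, add_mul, mul_sub, sub_mul,
      mul_assoc, one_mul, mul_one, mul_zero, h.mul_self_eq_zero, h.star_mul_star_self_eq_zero,
      h.mul_star_self, h.star_mul_star_self_mul_eq_zero, h.mul_star_self_mul]
    module

theorem IsCAR.siteAvg_sandwich (h : IsCAR a) {x : Γ} {P S : List Γ} (hxP : x ∉ P) (hxS : x ∉ S)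
    (k : Γ → Fin 4) (s : ℂ) (f : A) :
    siteAvg a x s (carMonomial a P k * f * carMonomial a S k) =
      carMonomial a P k * siteAvg a x (s * (-1) ^ (carOddCount P k + carOddCount S k)) f *
        carMonomial a S k := by
  have hconj : ∀ j, star (uFactor a j x) * (carMonomial a P k * f * carMonomial a S k) *
      uFactor a j x = ((-1 : ℂ) ^ (carParity j * (carOddCount P k + carOddCount S k))) •
        (carMonomial a P k * (star (uFactor a j x) * f * uFactor a j x) * carMonomial a S k) := by
    intro j
    have hP : CommutesUpTo ((-1 : ℂ) ^ (carParity j * carOddCount P k)) (star (uFactor a j x))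
        (carMonomial a P k) := by
      rcases star_uFactor_eq_or (a := a) x j with hu | hu <;> rw [hu]
      · exact h.commutesUpTo_uFactor_carMonomial hxP j k
      · exact (h.commutesUpTo_uFactor_carMonomial hxP j k).neg_left
    have hS := (h.commutesUpTo_uFactor_carMonomial hxS j k).symm
      (by rw [← mul_pow]; norm_num)
    rw [hP.conj_mul_mul hS, mul_add, pow_add]
  simp only [siteAvg_apply, hconj, smul_smul, Finset.mul_sum, Finset.sum_mul, mul_smul_comm,
    smul_mul_assoc, mul_pow, pow_mul']

theorem IsCAR.siteAvg_one_carMonomial_mem_carSpanEven (h : IsCAR a) {L : List Γ} (hL : L.Nodup)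
    {x : Γ} (hx : x ∈ L) {k : Γ → Fin 4} (hev : Even (carOddCount L k)) :
    siteAvg a x 1 (carMonomial a L k) ∈ carSpanEven a (L.toFinset.erase x) := by
  obtain ⟨P, T, rfl⟩ := List.append_of_mem hx
  have hPT : (P ++ T).Nodup := hL.sublist (by simp)
  have hxP : x ∉ P := fun hxP => (List.nodup_append.mp hL).2.2 x hxP x (by simp) rfl
  have hxT : x ∉ T := (List.nodup_cons.mp (List.nodup_append.mp hL).2.1).1
  have hcount : carOddCount (P ++ x :: T) k = carParity (k x) + carOddCount (P ++ T) k := by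
    simp only [carOddCount_append, carOddCount_cons]
    ring
  have hsupp : (P ++ T).toFinset = (P ++ x :: T).toFinset.erase x := by
    ext y
    by_cases hy : y = x <;> simp [hy, hxP, hxT]
  rw [carMonomial_append, carMonomial_cons, ← mul_assoc, h.siteAvg_sandwich hxP hxT, one_mul,
    ← carOddCount_append]
  rcases carParity_eq_zero_or_one (k x) with hm | hm
  · rw [hcount, hm, zero_add] at hev
    obtain ⟨c, hc⟩ := h.siteAvg_carFactor_of_even x hm
    rw [hev.neg_one_pow, hc, mul_smul_comm, smul_mul_assoc, mul_one, ← carMonomial_append]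
    exact Submodule.smul_mem _ _ (Submodule.subset_span ⟨P ++ T, k, hPT, hsupp, hev, rfl⟩)
  · have hodd : Odd (carOddCount (P ++ T) k) := by
      rw [hcount, hm, add_comm, Nat.even_add_one] at hev
      exact Nat.not_even_iff_odd.mp hev
    rw [hodd.neg_one_pow, h.siteAvg_carFactor_of_odd x hm, mul_zero, zero_mul]
    exact zero_mem _

theorem IsCAR.siteAvg_one_mem_carSpanEven (h : IsCAR a) {S : Finset Γ} {x : Γ} (hx : x ∈ S)
    {B : A} (hB : B ∈ carSpanEven a S) : siteAvg a x 1 B ∈ carSpanEven a (S.erase x) := by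
  refine (Submodule.span_le (p := (carSpanEven a (S.erase x)).comap (siteAvg a x 1))).mpr ?_ hB
  rintro _ ⟨L, k, hL, rfl, hev, rfl⟩
  exact h.siteAvg_one_carMonomial_mem_carSpanEven hL (List.mem_toFinset.mp hx) hev

end SiteAverage

section CondExp

variable {Γ A : Type*} [Ring A] [StarRing A] [Algebra ℂ A] {a : Γ → A}

theorem condExp_nil (B : A) : condExp a [] B = B := by
  simp [condExp, uProd]

theorem condExp_cons (x : Γ) (t : List Γ) (B : A) :
    condExp a (x :: t) B = condExp a t (siteAvg a x 1 B) := by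
  have hsum : ∑ α : Fin (t.length + 1) → Fin 4,
      star (uProd a (x :: t) α) * B * uProd a (x :: t) α =
        ∑ β : Fin t.length → Fin 4, star (uProd a t β) *
          (∑ j : Fin 4, star (uFactor a j x) * B * uFactor a j x) * uProd a t β := by
    rw [← (Fin.consEquiv fun _ => Fin 4).sum_comp, Fintype.sum_prod_type, Finset.sum_comm]
    refine Finset.sum_congr rfl fun β _ => ?_
    simp [Finset.mul_sum, Finset.sum_mul, uProd_cons, Fin.consEquiv, mul_assoc]
  simp only [condExp, siteAvg_apply, one_pow, one_smul, List.length_cons, hsum, pow_succ,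
    mul_inv, mul_smul_comm, smul_mul_assoc]
  rw [← Finset.smul_sum, smul_smul]

theorem IsCAR.condExp_mem_carSpanEven (h : IsCAR a) {l : List Γ} (hl : l.Nodup)
    {S : Finset Γ} (hlS : l.toFinset ⊆ S) {B : A} (hB : B ∈ carSpanEven a S) :
    condExp a l B ∈ carSpanEven a (S \ l.toFinset) := by
  induction l generalizing S B with
  | nil => simpa [condExp_nil] using hB
  | cons x t ih =>
    rw [List.nodup_cons] at hl
    rw [List.toFinset_cons, Finset.insert_subset_iff] at hlS
    rw [condExp_cons, List.toFinset_cons, Finset.sdiff_insert, ← Finset.erase_sdiff_comm]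
    refine ih hl.2 (fun y hy => Finset.mem_erase.mpr ⟨?_, hlS.2 hy⟩)
      (h.siteAvg_one_mem_carSpanEven hlS.1 hB)
    rintro rfl
    exact hl.1 (List.mem_toFinset.mp hy)

end CondExp

section CStarRing

variable {A : Type*} [NormedRing A] [StarRing A] [CStarRing A]

theorem norm_le_one_of_mem_unitary {u : A} (hu : u ∈ unitary A) : ‖u‖ ≤ 1 := by
  nontriviality A
  exact (CStarRing.norm_of_mem_unitary hu).le

theorem norm_sub_star_mul_mul_of_mem_unitary {u : A} (hu : u ∈ unitary A) (B : A) :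
    ‖B - star u * B * u‖ = ‖B * u - u * B‖ := by
  have : B - star u * B * u = star u * (u * B - B * u) := by
    rw [mul_sub, ← mul_assoc, Unitary.star_mul_self_of_mem hu, one_mul, mul_assoc]
  rw [this, CStarRing.norm_mem_unitary_mul _ (Unitary.star_mem hu), norm_sub_rev]

theorem norm_sub_average_conj_le [NormedAlgebra ℂ A] {ι : Type*} [Fintype ι] [Nonempty ι]
    {u : ι → A} (hu : ∀ i, u i ∈ unitary A) {B : A} {ε : ℝ}
    (hB : ∀ i, ‖B * u i - u i * B‖ ≤ ε) :
    ‖B - (Fintype.card ι : ℂ)⁻¹ • ∑ i, star (u i) * B * u i‖ ≤ ε := by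
  have hn : (Fintype.card ι : ℂ) ≠ 0 := by simp
  have hsum : B - (Fintype.card ι : ℂ)⁻¹ • ∑ i, star (u i) * B * u i =
      (Fintype.card ι : ℂ)⁻¹ • ∑ i, (B - star (u i) * B * u i) := by
    rw [Finset.sum_sub_distrib, smul_sub, Finset.sum_const, Finset.card_univ,
      ← Nat.cast_smul_eq_nsmul ℂ, smul_smul, inv_mul_cancel₀ hn, one_smul]
  calc ‖B - (Fintype.card ι : ℂ)⁻¹ • ∑ i, star (u i) * B * u i‖
      ≤ (Fintype.card ι : ℝ)⁻¹ * ∑ i, ‖B - star (u i) * B * u i‖ := by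
        rw [hsum, norm_smul, norm_inv, Complex.norm_natCast]
        gcongr
        exact norm_sum_le _ _
    _ ≤ (Fintype.card ι : ℝ)⁻¹ * ∑ _i : ι, ε := by
        gcongr with i
        rw [norm_sub_star_mul_mul_of_mem_unitary (hu i)]
        exact hB i
    _ = ε := by simp

end CStarRing

/-- local approximation of quasi-local even observables: if `A₀ ∈ 𝔄_Λ⁺`
almost commutes with every `B ∈ 𝔄_{Λ∖X}` (`‖[A₀,B]‖ ≤ ε‖B‖`), then
`‖A₀ − 𝔼_X^Λ(A₀)‖ ≤ ε`, and `𝔼_X^Λ(A₀) ∈ 𝔄_X⁺`; in particular there is `A' ∈ 𝔄_X⁺` with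
`‖A₀ − A'‖ ≤ ε`. -/
theorem condExp_local_approximation
    {Γ A : Type*} [DecidableEq Γ]
    [NormedRing A] [StarRing A] [CStarRing A] [NormedAlgebra ℂ A]
    (a : Γ → A) (hCAR : IsCAR a)
    (X Λ : Finset Γ) (hXΛ : X ⊆ Λ)
    (l : List Γ) (hl : l.Nodup) (hlset : l.toFinset = Λ \ X)
    (ε : ℝ) (hε : 0 < ε)
    (A₀ : A) (hA : A₀ ∈ carSpanEven a Λ)
    (hcomm : ∀ B ∈ carSpan a (Λ \ X), ‖A₀ * B - B * A₀‖ ≤ ε * ‖B‖) :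
    ‖A₀ - condExp a l A₀‖ ≤ ε ∧ condExp a l A₀ ∈ carSpanEven a X := by
  -- the spans `𝔄_S` are defined with the classical instance
  obtain rfl : ‹DecidableEq Γ› = fun x y => Classical.propDecidable (x = y) :=
    Subsingleton.elim _ _
  refine ⟨?_, ?_⟩
  · have hcard : (4 : ℂ) ^ l.length = Fintype.card (Fin l.length → Fin 4) := by simp
    rw [condExp, hcard]
    refine norm_sub_average_conj_le (hCAR.uProd_mem_unitary l) fun α => ?_
    calc ‖A₀ * uProd a l α - uProd a l α * A₀‖ ≤ ε * ‖uProd a l α‖ :=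
          hcomm _ (hlset ▸ uProd_mem_carSpan hl α)
      _ ≤ ε := mul_le_of_le_one_right hε.le
          (norm_le_one_of_mem_unitary (hCAR.uProd_mem_unitary l α))
  · have hE := hCAR.condExp_mem_carSpanEven hl (hlset ▸ Finset.sdiff_subset) hA
    rwa [hlset, Finset.sdiff_sdiff_eq_self hXΛ] at hE
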